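/- Let A be an associative unital ring, let i, j ∈ A, set δ = ij and R(s) = i(ij−ji)^(s−1) j for s ≥ 2, and assume that R(s)·j = 0 and δ·R(s) = R(s)·δ for all s ≥ 2. Then the following three families of relations are equivalent: (a) (ij−ji)^(m+1) j · (ij−ji)^m j = 0 for all m ≥ 0; (b) δ^(m+1) j δ^m j = δ^m j δ^(m+1) j for all m ≥ 0; (c) δ^m j δ^(m+1) j = δ^(2m+1) j² for all m ≥ 0. -/
import Mathlib

namespace PreprojAux
variable {A : Type*} [Ring A]

/-- Correction term `G a = ∑_{t<a} δ^(a-1-t) * j * (i c^(t+1) j)`, defined recursively. -/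
def G (i j : A) : ℕ → A
  | 0 => 0
  | a + 1 => (i * j) * G i j a + j * (i * (i * j - j * i) ^ (a + 1) * j)

variable (i j : A)

theorem Pform (a : ℕ) :
    (i * j - j * i) ^ (a + 1) * j
      = (i * j) ^ (a + 1) * j - (i * j) ^ a * j * (i * j) - G i j a := by
  induction a with
  | zero => simp [G]; noncomm_ring
  | succ a IH =>
    have hstep : (i * j - j * i) ^ (a + 2) * j
        = (i * j - j * i) * ((i * j - j * i) ^ (a + 1) * j) := by
      rw [pow_succ' (i * j - j * i) (a + 1), mul_assoc]
    rw [hstep, IH]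
    have hi : i * ((i * j) ^ (a + 1) * j - (i * j) ^ a * j * (i * j) - G i j a)
        = i * (i * j - j * i) ^ (a + 1) * j := by
      rw [← IH, ← mul_assoc]
    have hc : (i * j - j * i) * ((i * j) ^ (a + 1) * j - (i * j) ^ a * j * (i * j) - G i j a)
        = (i * j) * ((i * j) ^ (a + 1) * j - (i * j) ^ a * j * (i * j) - G i j a)
          - j * (i * ((i * j) ^ (a + 1) * j - (i * j) ^ a * j * (i * j) - G i j a)) := by
      rw [sub_mul, mul_assoc j i]
    rw [hc, hi]
    show _ = _ - _ - G i j (a + 1)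
    rw [G]
    rw [mul_sub, mul_sub]
    rw [pow_succ' (i * j) (a + 1), pow_succ' (i * j) a]
    noncomm_ring

theorem L1
    (hRd : ∀ t : ℕ, (i * j) * (i * (i * j - j * i) ^ (t + 1) * j)
      = (i * (i * j - j * i) ^ (t + 1) * j) * (i * j)) (t k : ℕ) :
    (i * (i * j - j * i) ^ (t + 1) * j) * (i * j) ^ k
      = (i * j) ^ k * (i * (i * j - j * i) ^ (t + 1) * j) := by
  induction k with
  | zero => simp
  | succ k IH =>
    rw [pow_succ' (i * j) k,
      ← mul_assoc (i * (i * j - j * i) ^ (t + 1) * j) (i * j) ((i * j) ^ k),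
      ← hRd t, mul_assoc, IH, ← mul_assoc]

theorem Gmulr (hRj : ∀ t : ℕ, (i * (i * j - j * i) ^ (t + 1) * j) * j = 0)
    (hRd : ∀ t : ℕ, (i * j) * (i * (i * j - j * i) ^ (t + 1) * j)
      = (i * (i * j - j * i) ^ (t + 1) * j) * (i * j)) (a k : ℕ) :
    G i j a * ((i * j) ^ k * j) = 0 := by
  induction a with
  | zero => simp [G]
  | succ a IH =>
    rw [G, add_mul, mul_assoc, IH, mul_zero, zero_add, mul_assoc,
        ← mul_assoc _ ((i*j)^k) j, L1 i j hRd, mul_assoc, hRj, mul_zero, mul_zero]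

theorem Gmull (a : ℕ) (X : A) (h : ∀ k, k < a → X * ((i * j) ^ k * j) = 0) :
    X * G i j a = 0 := by
  induction a generalizing X with
  | zero => simp [G]
  | succ a IH =>
    rw [G, mul_add, ← mul_assoc X (i * j) (G i j a), ← mul_assoc X j]
    have h1 : X * j = 0 := by simpa using h 0 (Nat.succ_pos a)
    have h2 : (X * (i * j)) * G i j a = 0 := by
      refine IH _ (fun k hk => ?_)
      rw [mul_assoc, ← mul_assoc (i*j), ← pow_succ' (i * j) k]
      exact h (k + 1) (by omega)
    rw [h1, h2, zero_mul, zero_add]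

theorem shift (u b : ℕ) (X : A) :
    (i * j) ^ (u + b) * j * X = (i * j) ^ u * ((i * j) ^ b * j * X) := by
  rw [pow_add, mul_assoc, mul_assoc, mul_assoc]

theorem L3 (hRj : ∀ t : ℕ, (i * (i * j - j * i) ^ (t + 1) * j) * j = 0)
    (hRd : ∀ t : ℕ, (i * j) * (i * (i * j - j * i) ^ (t + 1) * j)
      = (i * (i * j - j * i) ^ (t + 1) * j) * (i * j)) (a k : ℕ) :
    (i * j - j * i) ^ (a + 1) * j * ((i * j) ^ k * j)
      = (i * j) ^ (a + 1) * j * ((i * j) ^ k * j)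
        - (i * j) ^ a * j * ((i * j) ^ (k + 1) * j) := by
  rw [Pform i j a, sub_mul, sub_mul, Gmulr i j hRj hRd a k]
  rw [mul_assoc ((i*j)^a * j) (i*j) ((i*j)^k*j), ← mul_assoc (i*j) ((i*j)^k) j,
    ← pow_succ' (i*j) k, sub_zero]

theorem Lred (hRj : ∀ t : ℕ, (i * (i * j - j * i) ^ (t + 1) * j) * j = 0)
    (hRd : ∀ t : ℕ, (i * j) * (i * (i * j - j * i) ^ (t + 1) * j)
      = (i * (i * j - j * i) ^ (t + 1) * j) * (i * j)) (u k : ℕ) :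
    (i * j - j * i) ^ (u + k + 1) * j * ((i * j) ^ k * j)
      = (i * j) ^ u * ((i * j - j * i) ^ (k + 1) * j * ((i * j) ^ k * j)) := by
  rw [show u + k + 1 = (u + k) + 1 from rfl, L3 i j hRj hRd (u + k) k, L3 i j hRj hRd k k,
    mul_sub]
  congr 1
  · rw [show u + k + 1 = u + (k + 1) by omega, shift]
  · rw [shift]

end PreprojAux

theorem preprojective_relations_tfae (A : Type*) [Ring A] (i j : A)
    (hRj : ∀ s : ℕ, 2 ≤ s → (i * (i * j - j * i) ^ (s - 1) * j) * j = 0)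
    (hRδ : ∀ s : ℕ, 2 ≤ s →
      (i * j) * (i * (i * j - j * i) ^ (s - 1) * j)
        = (i * (i * j - j * i) ^ (s - 1) * j) * (i * j)) :
    [(∀ m : ℕ, ((i * j - j * i) ^ (m + 1) * j) * ((i * j - j * i) ^ m * j) = 0),
     (∀ m : ℕ, (i * j) ^ (m + 1) * j * ((i * j) ^ m * j)
        = (i * j) ^ m * j * ((i * j) ^ (m + 1) * j)),
     (∀ m : ℕ, (i * j) ^ m * j * ((i * j) ^ (m + 1) * j)
        = (i * j) ^ (2 * m + 1) * j ^ 2)].TFAE := by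
  have hRj' : ∀ t : ℕ, (i * (i * j - j * i) ^ (t + 1) * j) * j = 0 := by
    intro t
    have h := hRj (t + 2) (by omega)
    rwa [show t + 2 - 1 = t + 1 from rfl] at h
  have hRd' : ∀ t : ℕ, (i * j) * (i * (i * j - j * i) ^ (t + 1) * j)
      = (i * (i * j - j * i) ^ (t + 1) * j) * (i * j) := by
    intro t
    have h := hRδ (t + 2) (by omega)
    rwa [show t + 2 - 1 = t + 1 from rfl] at h
  tfae_have 1 → 2
  | ha => by
    have Z : ∀ m : ℕ, (i * j - j * i) ^ (m + 1) * j * ((i * j) ^ m * j) = 0 := by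
      intro m
      induction m using Nat.strong_induction_on with
      | _ m IH =>
        cases m with
        | zero => simpa using ha 0
        | succ n =>
          have hk : ∀ k, k < n + 1 →
              (i * j - j * i) ^ (n + 1 + 1) * j * ((i * j) ^ k * j) = 0 := by
            intro k hkn
            obtain ⟨u, hu⟩ : ∃ u, n + 1 + 1 = u + k + 1 := ⟨n + 1 - k, by omega⟩
            rw [hu, PreprojAux.Lred i j hRj' hRd' u k, IH k hkn, mul_zero]
          have hG : (i * j - j * i) ^ (n + 1 + 1) * j * PreprojAux.G i j n = 0 :=
            PreprojAux.Gmull i j n _ (fun k hki => hk k (by omega))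
          have h0 := ha (n + 1)
          rw [PreprojAux.Pform i j n, mul_sub, mul_sub,
            ← mul_assoc ((i * j - j * i) ^ (n + 1 + 1) * j) ((i * j) ^ n * j) (i * j),
            hk n (by omega), zero_mul, hG, sub_zero, sub_zero] at h0
          exact h0
    intro m
    have h := Z m
    rw [PreprojAux.L3 i j hRj' hRd' m m] at h
    exact sub_eq_zero.mp h
  tfae_have 2 → 3
  | hb => by
    have TT : ∀ b u : ℕ, (i * j) ^ (u + b) * j * ((i * j) ^ (b + 1) * j)
        = (i * j) ^ (u + 2 * b + 1) * j ^ 2 := by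
      intro b
      induction b with
      | zero =>
        intro u
        rw [PreprojAux.shift i j u 0, ← hb 0, ← PreprojAux.shift i j u (0 + 1)]
        rw [show u + (0 + 1) = u + 2 * 0 + 1 by omega]
        simp [sq, mul_assoc]
      | succ b IHb =>
        intro u
        rw [PreprojAux.shift i j u (b + 1), ← hb (b + 1), ← PreprojAux.shift i j u (b + 1 + 1),
          show u + (b + 1 + 1) = u + 2 + b by omega, IHb (u + 2),
          show u + 2 + 2 * b + 1 = u + 2 * (b + 1) + 1 by omega]
    intro m
    have h := TT m 0
    rwa [zero_add, zero_add] at h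
  tfae_have 3 → 1
  | hc => by
    have Star : ∀ u t : ℕ, (i * j) ^ (u + t) * j * ((i * j) ^ (t + 1) * j)
        = (i * j) ^ (u + 2 * t + 1) * j ^ 2 := by
      intro u t
      rw [PreprojAux.shift i j u t, hc t, ← mul_assoc, ← pow_add,
        show u + (2 * t + 1) = u + 2 * t + 1 by omega]
    have ZC : ∀ m k : ℕ, k ≤ m →
        (i * j - j * i) ^ (m + 1) * j * ((i * j) ^ k * j) = 0 := by
      intro m k hkm
      rw [PreprojAux.L3 i j hRj' hRd' m k]
      cases k with
      | zero =>
        have h2 := Star m 0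
        rw [add_zero] at h2
        rw [h2, show m + 2 * 0 + 1 = m + 1 by omega]
        simp [sq, mul_assoc]
      | succ t =>
        obtain ⟨u, hu⟩ : ∃ u, m = u + (t + 1) := ⟨m - (t + 1), by omega⟩
        have h1 : (i * j) ^ (m + 1) * j * ((i * j) ^ (t + 1) * j)
            = (i * j) ^ (u + 2 + 2 * t + 1) * j ^ 2 := by
          rw [show m + 1 = (u + 2) + t by omega, Star (u + 2) t]
        have h2 : (i * j) ^ m * j * ((i * j) ^ (t + 1 + 1) * j)
            = (i * j) ^ (u + 2 * (t + 1) + 1) * j ^ 2 := by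
          rw [hu, Star u (t + 1)]
        rw [h1, h2, show u + 2 + 2 * t + 1 = u + 2 * (t + 1) + 1 by omega, sub_self]
    intro m
    cases m with
    | zero =>
      have h := ZC 0 0 (le_refl 0)
      simp only [pow_zero, one_mul] at h ⊢
      exact h
    | succ n =>
      have hG : (i * j - j * i) ^ (n + 1 + 1) * j * PreprojAux.G i j n = 0 :=
        PreprojAux.Gmull i j n _ (fun k hk => ZC (n + 1) k (by omega))
      rw [PreprojAux.Pform i j n, mul_sub, mul_sub,
        ← mul_assoc ((i * j - j * i) ^ (n + 1 + 1) * j) ((i * j) ^ n * j) (i * j),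
        ZC (n + 1) (n + 1) (le_refl _), ZC (n + 1) n (by omega), zero_mul, hG]
      simp
  tfae_finish
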